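/- arXiv:math/0601064 — 5 statements merged into one kernel-verified Lean document; each statement's English description precedes it below -/
import Mathlib

section
/- Let n ≥ 2 be an integer, set s_k = sin(kπ/(2n+1)) for integers k, and let M_n be the n×n matrix with entries m_{ij} = 1 if i+j > n and m_{ij} = 0 if i+j ≤ n (1 ≤ i,j ≤ n). Then M_n · (s_1, s_2, …, s_n)ᵀ = (s_n/s_1) · (s_1, s_2, …, s_n)ᵀ; equivalently, for every 1 ≤ i ≤ n, ∑_{j=n−i+1}^{n} s_j = (s_n/s_1)·s_i. In particular the strictly positive vector (s_1,…,s_n) is an eigenvector of M_n with eigenvalue s_n/s_1 > 1, so s_n/s_1 is the Perron–Frobenius eigenvalue (substitution factor) of M_n. -/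
open Real

/-- For `n ≥ 2`, with `s k = sin(kπ/(2n+1))` and `M_n` the 0-1 matrix with
`m_{ij} = 1` iff `i + j > n` (indices `1,…,n`), the strictly positive vector
`(s_1,…,s_n)` is an eigenvector of `M_n` with eigenvalue `s_n/s_1 > 1`:
`M_n (s_1,…,s_n)ᵀ = (s_n/s_1)(s_1,…,s_n)ᵀ`, equivalently
`∑_{j=n−i+1}^{n} s_j = (s_n/s_1)·s_i` for `1 ≤ i ≤ n`. -/
theorem substitution_matrix_pf_eigenvector (n : ℕ) (hn : 2 ≤ n)
    (s : ℕ → ℝ) (hs : ∀ k, s k = Real.sin ((k : ℝ) * π / (2 * n + 1)))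
    (M : Matrix (Fin n) (Fin n) ℝ)
    (hM : ∀ i j : Fin n, M i j = if n < (i : ℕ) + 1 + ((j : ℕ) + 1) then 1 else 0) :
    (M.mulVec (fun j : Fin n => s ((j : ℕ) + 1)) =
        fun i : Fin n => (s n / s 1) * s ((i : ℕ) + 1)) ∧
    (∀ i : ℕ, 1 ≤ i → i ≤ n →
        ∑ j ∈ Finset.Icc (n - i + 1) n, s j = (s n / s 1) * s i) ∧
    (∀ k : ℕ, 1 ≤ k → k ≤ n → 0 < s k) ∧
    1 < s n / s 1 := by
  have hden : (0:ℝ) < 2 * (n:ℝ) + 1 := by positivity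
  set θ : ℝ := π / (2 * n + 1) with hθ
  have hθpos : 0 < θ := by positivity
  have hsk : ∀ k : ℕ, s k = Real.sin (k * θ) := by
    intro k; rw [hs k, hθ, mul_div_assoc]
  have hpi : (2 * (n:ℝ) + 1) * θ = π := by
    rw [hθ]; field_simp
  have hcn : (2:ℝ) ≤ (n:ℝ) := by exact_mod_cast hn
  -- positivity of s k
  have spos : ∀ k : ℕ, 1 ≤ k → k ≤ n → 0 < s k := by
    intro k hk1 hk2
    have hck1 : (1:ℝ) ≤ (k:ℝ) := by exact_mod_cast hk1
    have hck2 : (k:ℝ) ≤ (n:ℝ) := by exact_mod_cast hk2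
    rw [hsk]
    apply Real.sin_pos_of_pos_of_lt_pi
    · nlinarith
    · nlinarith
  have hs1pos : 0 < s 1 := spos 1 le_rfl (by omega)
  -- the telescoping function
  set g : ℕ → ℝ := fun m => Real.cos (m * θ) + Real.cos ((m + 1) * θ) with hg
  have tele : ∀ m : ℕ, 2 * Real.sin θ * Real.sin ((m + 1 : ℕ) * θ) = g m - g (m + 1) := by
    intro m
    simp only [hg]
    push_cast
    rw [show ((m:ℝ)) * θ = ((m:ℝ) + 1) * θ - θ by ring,
        show ((m:ℝ) + 1 + 1) * θ = ((m:ℝ) + 1) * θ + θ by ring,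
        Real.cos_sub, Real.cos_add]
    ring
  have H : ∀ i : ℕ, i ≤ n →
      2 * Real.sin θ * ∑ j ∈ Finset.Icc (n - i + 1) n, Real.sin (j * θ) = g (n - i) - g n := by
    intro i
    induction i with
    | zero =>
        intro _
        rw [Finset.Icc_eq_empty (by omega)]
        simp
    | succ i ih =>
        intro h
        have hin : i ≤ n := by omega
        have ha : n - (i + 1) + 1 = n - i := by omega
        have hins : Finset.Icc (n - i) n = insert (n - i) (Finset.Icc (n - i + 1) n) := by
          ext x; simp only [Finset.mem_Icc, Finset.mem_insert]; omega
        rw [ha, hins, Finset.sum_insert (by simp only [Finset.mem_Icc]; omega)]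
        have t := tele (n - (i + 1))
        rw [ha] at t
        linear_combination t + ih hin
  have gn0 : g n = 0 := by
    have h1 : ((n:ℝ) + 1) * θ = π - (n:ℝ) * θ := by
      rw [hθ]; field_simp; ring
    simp only [hg]
    rw [h1, Real.cos_pi_sub]
    ring
  have gni : ∀ i : ℕ, 1 ≤ i → i ≤ n →
      g (n - i) = 2 * Real.sin ((n:ℝ) * θ) * Real.sin ((i:ℝ) * θ) := by
    intro i hi1 hi2
    simp only [hg]
    rw [Nat.cast_sub hi2]
    have h2 : ((n:ℝ) - (i:ℝ) + 1) * θ = π - ((n:ℝ) + (i:ℝ)) * θ := by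
      rw [hθ]; field_simp; ring
    rw [h2, Real.cos_pi_sub,
        show ((n:ℝ) - (i:ℝ)) * θ = (n:ℝ) * θ - (i:ℝ) * θ by ring,
        show ((n:ℝ) + (i:ℝ)) * θ = (n:ℝ) * θ + (i:ℝ) * θ by ring,
        Real.cos_sub, Real.cos_add]
    ring
  have hs1 : s 1 = Real.sin θ := by rw [hsk]; norm_num
  -- part 2
  have part2 : ∀ i : ℕ, 1 ≤ i → i ≤ n →
      ∑ j ∈ Finset.Icc (n - i + 1) n, s j = (s n / s 1) * s i := by
    intro i hi1 hi2
    have key := H i hi2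
    rw [gn0, gni i hi1 hi2] at key
    have hsum : ∑ j ∈ Finset.Icc (n - i + 1) n, s j
        = ∑ j ∈ Finset.Icc (n - i + 1) n, Real.sin (j * θ) :=
      Finset.sum_congr rfl (fun j _ => hsk j)
    rw [hsum, hsk n, hsk i, hs1, div_mul_eq_mul_div, eq_div_iff (ne_of_gt (hs1 ▸ hs1pos))]
    linear_combination key / 2
  -- part 4 : 1 < s n / s 1
  have hratio : 1 < s n / s 1 := by
    rw [lt_div_iff₀ hs1pos, one_mul, hs1, hsk n]
    apply Real.strictMonoOn_sin
    · constructor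
      · nlinarith [Real.pi_pos]
      · nlinarith [Real.pi_pos]
    · constructor
      · nlinarith [Real.pi_pos]
      · nlinarith [Real.pi_pos]
    · nlinarith
  refine ⟨?_, part2, spos, hratio⟩
  -- part 1: the eigenvector equation
  funext i
  have hilt : (i:ℕ) < n := i.isLt
  have e0 : M.mulVec (fun j : Fin n => s ((j : ℕ) + 1)) i
      = ∑ j : Fin n, (if n < (i:ℕ) + 1 + ((j:ℕ) + 1) then s ((j:ℕ) + 1) else 0) := by
    simp [Matrix.mulVec, dotProduct, hM, ite_mul]
  rw [e0, Fin.sum_univ_eq_sum_range (fun j => if n < (i:ℕ) + 1 + (j + 1) then s (j + 1) else 0)]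
  have e1 : ∑ j ∈ Finset.range n, (if n < (i:ℕ) + 1 + (j + 1) then s (j + 1) else 0)
      = ∑ j ∈ Finset.Icc 1 n, (if n < (i:ℕ) + 1 + j then s j else 0) := by
    rw [← Finset.Ico_add_one_right_eq_Icc, Finset.sum_Ico_eq_sum_range]
    simp [Nat.add_comm]
  have e2 : ∑ j ∈ Finset.Icc 1 n, (if n < (i:ℕ) + 1 + j then s j else 0)
      = ∑ j ∈ Finset.Icc (n - ((i:ℕ) + 1) + 1) n, s j := by
    rw [← Finset.sum_filter]
    congr 1
    ext x
    simp only [Finset.mem_filter, Finset.mem_Icc]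
    omega
  rw [e1, e2, part2 ((i:ℕ) + 1) (by omega) (by omega)]
end

section
/- Let (X,d) be a nonempty complete metric space, let J be a nonempty finite index set, let 0 ≤ c < 1, and suppose that for each j ∈ J we are given a nonempty finite family of pairs (f, j') where f : X → X is Lipschitz with constant c and j' ∈ J. Then there exists a unique family (K_j)_{j ∈ J} of nonempty compact subsets of X such that for every j ∈ J, K_j = ⋃_{(f, j') in the family for j} f(K_{j'}). -/
/-!
The map `(K_j)_j ↦ (⋃_{(f, j')} f(K_{j'}))_j` sends tuples of nonempty compact sets to tuples of
nonempty compact sets. A `c`-Lipschitz map shrinks Hausdorff distances by the factor `c`, and a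
union of sets is at Hausdorff distance at most the supremum of the pairwise distances, so with the
sup metric on tuples this map is a contraction of a complete space. The Banach fixed point theorem
gives the unique invariant tuple.
-/

open Metric Set NNReal TopologicalSpace

section Lipschitz

variable {α β : Type*} [PseudoEMetricSpace α] [PseudoEMetricSpace β] {K : ℝ≥0} {g : α → β}

theorem LipschitzWith.infEDist_image_le (hg : LipschitzWith K g) (x : α) {t : Set α}
    (ht : t.Nonempty) : infEDist (g x) (g '' t) ≤ K * infEDist x t := by
  have : Nonempty t := ht.to_subtype
  have hx : infEDist x t = ⨅ y : t, edist x y := by rw [infEDist, iInf_subtype']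
  rw [hx, ENNReal.mul_iInf (by simp)]
  exact le_iInf fun y =>
    (infEDist_le_edist_of_mem (mem_image_of_mem g y.2)).trans (hg.edist_le_mul x y)

theorem LipschitzWith.hausdorffEDist_image_le (hg : LipschitzWith K g) {s t : Set α}
    (hs : s.Nonempty) (ht : t.Nonempty) :
    hausdorffEDist (g '' s) (g '' t) ≤ K * hausdorffEDist s t := by
  apply hausdorffEDist_le_of_infEDist
  · rintro _ ⟨x, hx, rfl⟩
    exact (hg.infEDist_image_le x ht).trans
      (mul_le_mul_right (infEDist_le_hausdorffEDist_of_mem hx) _)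
  · rintro _ ⟨x, hx, rfl⟩
    exact (hg.infEDist_image_le x hs).trans
      (mul_le_mul_right (hausdorffEDist_comm (s := s) ▸ infEDist_le_hausdorffEDist_of_mem hx) _)

end Lipschitz

namespace NonemptyCompacts

variable {X J : Type*} [MetricSpace X] {I : J → Type*} [∀ j, Finite (I j)] [∀ j, Nonempty (I j)]

def hutchinsonMap (f : ∀ j, I j → X → X) (hf : ∀ j i, Continuous (f j i)) (t : ∀ j, I j → J)
    (K : J → NonemptyCompacts X) (j : J) : NonemptyCompacts X where
  carrier := ⋃ i, f j i '' K (t j i)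
  isCompact' := isCompact_iUnion fun i => (K (t j i)).isCompact.image (hf j i)
  nonempty' := nonempty_iUnion.2 ⟨Classical.arbitrary _, (K _).nonempty.image _⟩

theorem contractingWith_hutchinsonMap [Fintype J] {c : ℝ≥0} (hc : c < 1)
    {f : ∀ j, I j → X → X} (hf : ∀ j i, LipschitzWith c (f j i)) (t : ∀ j, I j → J) :
    ContractingWith c (hutchinsonMap f (fun j i => (hf j i).continuous) t) := by
  refine ⟨hc, fun K L => edist_pi_le_iff.2 fun j => ?_⟩
  refine hausdorffEDist_iUnion_le.trans (iSup_le fun i => ?_)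
  calc hausdorffEDist (f j i '' K (t j i)) (f j i '' L (t j i))
      ≤ c * edist (K (t j i)) (L (t j i)) :=
        (hf j i).hausdorffEDist_image_le (K (t j i)).nonempty (L (t j i)).nonempty
    _ ≤ c * edist K L := mul_le_mul_right (edist_le_pi_edist K L (t j i)) _

end NonemptyCompacts

open NonemptyCompacts in
theorem graph_directed_hutchinson_general {X : Type*} [MetricSpace X] [CompleteSpace X]
    [Nonempty X] {J : Type*} [Finite J]
    (c : ℝ) (hc1 : c < 1)
    (I : J → Type*) [∀ j, Finite (I j)] [∀ j, Nonempty (I j)]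
    (f : ∀ j, I j → X → X) (t : ∀ j, I j → J)
    (hf : ∀ j (i : I j) (x y : X), dist (f j i x) (f j i y) ≤ c * dist x y) :
    ∃! K : J → Set X,
      (∀ j, IsCompact (K j) ∧ (K j).Nonempty) ∧
      (∀ j, K j = ⋃ i : I j, f j i '' K (t j i)) := by
  have := Fintype.ofFinite J
  have hlip : ∀ j i, LipschitzWith c.toNNReal (f j i) := fun j i =>
    .of_dist_le_mul fun x y =>
      (hf j i x y).trans (mul_le_mul_of_nonneg_right (Real.le_coe_toNNReal c) dist_nonneg)
  let F := hutchinsonMap f (fun j i => (hlip j i).continuous) t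
  have hF : ContractingWith c.toNNReal F :=
    contractingWith_hutchinsonMap (Real.toNNReal_lt_one.2 hc1) hlip t
  let P := hF.fixedPoint F
  have hP : Function.IsFixedPt F P := hF.fixedPoint_isFixedPt
  refine ⟨fun j => P j, ⟨fun j => ⟨(P j).isCompact, (P j).nonempty⟩,
    fun j => congrArg (fun Q => (Q j : Set X)) hP.symm⟩, ?_⟩
  rintro K ⟨hK, hKfix⟩
  let K' : J → NonemptyCompacts X := fun j => ⟨⟨K j, (hK j).1⟩, (hK j).2⟩
  have hK' : Function.IsFixedPt F K' := funext fun j => NonemptyCompacts.ext (hKfix j).symm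
  exact funext fun j => congrArg (fun Q => (Q j : Set X)) (hF.fixedPoint_unique' hK' hP)

/-- Graph-directed Hutchinson theorem: given a nonempty complete metric space `X`,
a nonempty finite index set `J`, a constant `0 ≤ c < 1`, and for each `j ∈ J` a
nonempty finite family of pairs `(f, j')` where `f : X → X` is Lipschitz with
constant `c` and `j' ∈ J`, there is a unique family `(K_j)_{j ∈ J}` of nonempty
compact subsets of `X` with `K_j = ⋃_{(f,j')} f(K_{j'})` for every `j`. -/
theorem graph_directed_hutchinson {X : Type*} [MetricSpace X] [CompleteSpace X]
    [Nonempty X] {J : Type*} [Finite J] [Nonempty J]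
    (c : ℝ) (hc0 : 0 ≤ c) (hc1 : c < 1)
    (I : J → Type*) [∀ j, Finite (I j)] [∀ j, Nonempty (I j)]
    (f : ∀ j, I j → X → X) (t : ∀ j, I j → J)
    (hf : ∀ j (i : I j) (x y : X), dist (f j i x) (f j i y) ≤ c * dist x y) :
    ∃! K : J → Set X,
      (∀ j, IsCompact (K j) ∧ (K j).Nonempty) ∧
      (∀ j, K j = ⋃ i : I j, f j i '' K (t j i)) :=
  graph_directed_hutchinson_general c hc1 I f t hf
end

section
/- Let λ = sin(4π/9)/sin(π/9). Then λ³ − 3λ² + 1 = 0 and 2 < λ < 3 (in particular λ > 1). -/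
open Real

/-- For `λ = sin(4π/9)/sin(π/9)` one has `λ³ − 3λ² + 1 = 0` and `2 < λ < 3`
(in particular `λ > 1`). -/
theorem lambda_root_and_bounds :
    (Real.sin (4 * π / 9) / Real.sin (π / 9)) ^ 3
        - 3 * (Real.sin (4 * π / 9) / Real.sin (π / 9)) ^ 2 + 1 = 0 ∧
    2 < Real.sin (4 * π / 9) / Real.sin (π / 9) ∧
    Real.sin (4 * π / 9) / Real.sin (π / 9) < 3 := by
  have hpi := Real.pi_pos
  have hx : (0:ℝ) < π/9 := by positivity
  have hs : Real.sin (π/9) > 0 :=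
    Real.sin_pos_of_pos_of_lt_pi hx (by linarith)
  have hsin4 : Real.sin (4*π/9) =
      Real.sin (π/9) * (8 * Real.cos (π/9)^3 - 4 * Real.cos (π/9)) := by
    have h4 : (4*π/9 : ℝ) = 2*(2*(π/9)) := by ring
    rw [h4, Real.sin_two_mul, Real.sin_two_mul, Real.cos_two_mul]; ring
  have hcube : 4 * Real.cos (π/9)^3 - 3 * Real.cos (π/9) = 1/2 := by
    have hc3 : Real.cos (3*(π/9)) = 4 * Real.cos (π/9)^3 - 3 * Real.cos (π/9) :=
      Real.cos_three_mul _
    have h3 : (3*(π/9):ℝ) = π/3 := by ring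
    rw [← hc3, h3, Real.cos_pi_div_three]
  have hlam : Real.sin (4*π/9) / Real.sin (π/9) = 2 * Real.cos (π/9) + 1 := by
    rw [hsin4]
    field_simp
    nlinarith [hcube]
  have hclt : Real.cos (π/9) < 1 := by
    have h := Real.cos_lt_cos_of_nonneg_of_le_pi le_rfl (by linarith) hx
    rwa [Real.cos_zero] at h
  have hcgt : (1:ℝ)/2 < Real.cos (π/9) := by
    have h := Real.cos_lt_cos_of_nonneg_of_le_pi (le_of_lt hx) (by linarith) (by linarith : π/9 < π/3)
    rw [Real.cos_pi_div_three] at h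
    exact h
  rw [hlam]
  refine ⟨?_, by linarith, by linarith⟩
  have : (2 * Real.cos (π/9) + 1)^3 - 3*(2 * Real.cos (π/9) + 1)^2 + 1
      = 2 * (4 * Real.cos (π/9)^3 - 3 * Real.cos (π/9)) - 1 := by ring
  rw [this, hcube]; norm_num
end

section
/- Let s_k = sin(kπ/9) for k = 1,2,3,4, and let λ = s₄/s₁, λ₂ = −s₁/s₂, λ₃ = s₂/s₄. Then λ₂ and λ₃ satisfy x³ − 3x² + 1 = 0, so X³ − 3X² + 1 = (X − λ)(X − λ₂)(X − λ₃); moreover −1 < λ₂ < 0 and 0 < λ₃ < 1 while λ > 1. Consequently λ is a Pisot–Vijayaraghavan (PV) number: it is an algebraic integer greater than 1 all of whose algebraic conjugates have modulus strictly less than 1. -/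
open Real Polynomial

/-!
Put `c = cos (π / 9)`. The double-angle formulas give `λ = 4c(2c² - 1)`, `λ₂ = -1/(2c)` and
`λ₃ = 1/(2(2c² - 1))`, while `cos 3x = 1/2` gives `8c³ - 6c - 1 = 0`, so that `λ = 2c + 1`.
Vieta's formulas then show that `λ, λ₂, λ₃` are the three roots of `x³ - 3x² + 1`, and
`c > cos (π / 6) = √3 / 2` puts `λ₂` in `(-1, 0)` and `λ₃` in `(0, 1)`. The minimal polynomial
of `λ` divides this monic integer cubic, so its other complex roots are among `λ₂, λ₃`.
-/

theorem cubic_eq_prod_of_vieta {R : Type*} [CommRing R] {a b d : R} (h₁ : a + b + d = 3)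
    (h₂ : a * b + a * d + b * d = 0) (h₃ : a * b * d = -1) :
    (X ^ 3 - 3 * X ^ 2 + 1 : R[X]) = (X - C a) * (X - C b) * (X - C d) := by
  have : (X ^ 3 - 3 * X ^ 2 + 1 : R[X])
      = X ^ 3 - C (a + b + d) * X ^ 2 + C (a * b + a * d + b * d) * X - C (a * b * d) := by
    rw [h₁, h₂, h₃]
    simp only [map_ofNat, map_zero, map_neg, map_one]
    ring
  rw [this]
  simp only [map_add, map_mul]
  ring

/-- The substitution `x = 2c + 1` turns the triple-angle cubic `8c³ - 6c - 1` into
`x³ - 3x² + 1`. -/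
theorem cubic_eq_prod_of_triple_angle {K : Type*} [Field K] {c : K}
    (hc : 8 * c ^ 3 - 6 * c - 1 = 0) (hc₀ : 2 * c ≠ 0) (hc₁ : 2 * (2 * c ^ 2 - 1) ≠ 0) :
    (X ^ 3 - 3 * X ^ 2 + 1 : K[X])
      = (X - C (2 * c + 1)) * (X - C (-(1 / (2 * c)))) * (X - C (1 / (2 * (2 * c ^ 2 - 1)))) := by
  have h2 : (2 : K) ≠ 0 := left_ne_zero_of_mul hc₀
  have hc0 : c ≠ 0 := right_ne_zero_of_mul hc₀
  have hq : 2 * c ^ 2 - 1 ≠ 0 := right_ne_zero_of_mul hc₁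
  apply cubic_eq_prod_of_vieta
  · field_simp
    linear_combination (c - 1) * hc
  · field_simp
    linear_combination -hc
  · field_simp
    linear_combination hc

theorem norm_lt_one_of_isRoot_minpoly {p : ℚ[X]} {x a b : ℝ}
    (hp : p.map (algebraMap ℚ ℝ) = (X - C x) * (X - C a) * (X - C b))
    (ha : |a| < 1) (hb : |b| < 1) {z : ℂ}
    (hz : ((minpoly ℚ x).map (algebraMap ℚ ℂ)).IsRoot z) (hzx : z ≠ x) : ‖z‖ < 1 := by
  have hpx : aeval x p = 0 := by
    rw [aeval_def, eval₂_eq_eval_map, hp]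
    simp
  have hpz : ((p.map (algebraMap ℚ ℝ)).map (algebraMap ℝ ℂ)).IsRoot z := by
    rw [map_map, ← IsScalarTower.algebraMap_eq ℚ ℝ ℂ]
    exact hz.dvd (Polynomial.map_dvd (algebraMap ℚ ℂ) (minpoly.dvd ℚ x hpx))
  simp only [hp, Polynomial.map_mul, Polynomial.map_sub, map_X, map_C, IsRoot, eval_mul,
    eval_sub, eval_X, eval_C, mul_eq_zero, sub_eq_zero, Complex.coe_algebraMap] at hpz
  rcases hpz with (rfl | rfl) | rfl
  · exact (hzx rfl).elim
  · rwa [Complex.norm_real, Real.norm_eq_abs]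
  · rwa [Complex.norm_real, Real.norm_eq_abs]

theorem cos_pi_div_nine_cubic : 8 * cos (π / 9) ^ 3 - 6 * cos (π / 9) - 1 = 0 := by
  have h := cos_three_mul (π / 9)
  rw [show 3 * (π / 9) = π / 3 by ring, cos_pi_div_three] at h
  linear_combination -2 * h

theorem three_lt_four_mul_cos_pi_div_nine_sq : 3 < 4 * cos (π / 9) ^ 2 := by
  have hlt : cos (π / 6) < cos (π / 9) :=
    cos_lt_cos_of_nonneg_of_le_pi (by positivity) (by linarith [pi_pos]) (by linarith [pi_pos])
  have hpos : 0 < cos (π / 6) := cos_pos_of_mem_Ioo ⟨by linarith [pi_pos], by linarith [pi_pos]⟩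
  nlinarith [sq_cos_pi_div_six]

theorem sin_four_mul (x : ℝ) : sin (4 * x) = 2 * sin (2 * x) * (2 * cos x ^ 2 - 1) := by
  rw [show 4 * x = 2 * (2 * x) by ring, sin_two_mul, cos_two_mul]

theorem sin_div_sin_two_mul {x : ℝ} (hx : sin x ≠ 0) : sin x / sin (2 * x) = 1 / (2 * cos x) := by
  rw [sin_two_mul, show 2 * sin x * cos x = sin x * (2 * cos x) by ring, div_mul_cancel_left₀ hx,
    one_div]

theorem sin_two_mul_div_sin_four_mul {x : ℝ} (hx : sin (2 * x) ≠ 0) :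
    sin (2 * x) / sin (4 * x) = 1 / (2 * (2 * cos x ^ 2 - 1)) := by
  rw [sin_four_mul, show 2 * sin (2 * x) * (2 * cos x ^ 2 - 1) = sin (2 * x) * (2 * (2 * cos x ^ 2 - 1))
    by ring, div_mul_cancel_left₀ hx, one_div]

theorem sin_four_mul_div_sin {x : ℝ} (hx : sin x ≠ 0) :
    sin (4 * x) / sin x = 4 * cos x * (2 * cos x ^ 2 - 1) := by
  rw [sin_four_mul, sin_two_mul]
  field_simp
  ring

theorem sin_ratios_pi_div_nine :
    sin (4 * (π / 9)) / sin (π / 9) = 2 * cos (π / 9) + 1 ∧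
    sin (π / 9) / sin (2 * (π / 9)) = 1 / (2 * cos (π / 9)) ∧
    sin (2 * (π / 9)) / sin (4 * (π / 9)) = 1 / (2 * (2 * cos (π / 9) ^ 2 - 1)) := by
  have hsin (k : ℝ) (hk : 0 < k) (hk9 : k < 9) : sin (k * (π / 9)) ≠ 0 :=
    (sin_pos_of_pos_of_lt_pi (by positivity) (by nlinarith [pi_pos])).ne'
  have hsin₁ : sin (π / 9) ≠ 0 := by simpa using hsin 1 one_pos (by norm_num)
  refine ⟨?_, sin_div_sin_two_mul hsin₁,
    sin_two_mul_div_sin_four_mul (hsin 2 two_pos (by norm_num))⟩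
  rw [sin_four_mul_div_sin hsin₁]
  linear_combination cos_pi_div_nine_cubic

/-- With `s_k = sin(kπ/9)`, `λ = s₄/s₁`, `λ₂ = −s₁/s₂`, `λ₃ = s₂/s₄`:
`λ₂` and `λ₃` are roots of `x³ − 3x² + 1`, so
`X³ − 3X² + 1 = (X − λ)(X − λ₂)(X − λ₃)`; moreover `−1 < λ₂ < 0`, `0 < λ₃ < 1`
and `λ > 1`. Consequently `λ` is a PV number: an algebraic integer greater
than `1` all of whose other conjugates have modulus strictly less than `1`. -/
theorem lambda_is_PV (s : ℕ → ℝ) (hs : ∀ k, s k = Real.sin ((k : ℝ) * π / 9))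
    (lam lam2 lam3 : ℝ)
    (h1 : lam = s 4 / s 1) (h2 : lam2 = -(s 1 / s 2)) (h3 : lam3 = s 2 / s 4) :
    lam2 ^ 3 - 3 * lam2 ^ 2 + 1 = 0 ∧
    lam3 ^ 3 - 3 * lam3 ^ 2 + 1 = 0 ∧
    (X ^ 3 - 3 * X ^ 2 + 1 : ℝ[X]) = (X - C lam) * (X - C lam2) * (X - C lam3) ∧
    (-1 < lam2 ∧ lam2 < 0) ∧ (0 < lam3 ∧ lam3 < 1) ∧ 1 < lam ∧
    IsIntegral ℤ lam ∧
    (∀ z : ℂ, ((minpoly ℚ lam).map (algebraMap ℚ ℂ)).IsRoot z → z ≠ (lam : ℂ) →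
      ‖z‖ < 1) := by
  have hs_mul (k : ℕ) : s k = sin (k * (π / 9)) := by rw [hs, mul_div_assoc]
  obtain ⟨hr1, hr2, hr3⟩ := sin_ratios_pi_div_nine
  simp only [hs_mul, Nat.cast_one, Nat.cast_ofNat, one_mul, hr1, hr2, hr3] at h1 h2 h3
  have hcube := cos_pi_div_nine_cubic
  have hsq := three_lt_four_mul_cos_pi_div_nine_sq
  set c := cos (π / 9)
  have hcos : 0 < c := cos_pos_of_mem_Ioo ⟨by linarith [pi_pos], by linarith [pi_pos]⟩
  have hq : 0 < 2 * c ^ 2 - 1 := by linarith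
  have hfac : (X ^ 3 - 3 * X ^ 2 + 1 : ℝ[X]) = (X - C lam) * (X - C lam2) * (X - C lam3) := by
    rw [h1, h2, h3]
    exact cubic_eq_prod_of_triple_angle hcube (by positivity) (by positivity)
  have hroot (y : ℝ) : y ^ 3 - 3 * y ^ 2 + 1 = (y - lam) * (y - lam2) * (y - lam3) := by
    simpa using congrArg (eval y) hfac
  have hlam₂ : -1 < lam2 ∧ lam2 < 0 := by
    rw [h2, neg_lt_neg_iff, neg_lt_zero, div_lt_one (by positivity)]
    exact ⟨by nlinarith, by positivity⟩
  have hlam₃ : 0 < lam3 ∧ lam3 < 1 := by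
    rw [h3, div_lt_one (by positivity)]
    exact ⟨by positivity, by linarith⟩
  refine ⟨by rw [hroot]; ring, by rw [hroot]; ring, hfac, hlam₂, hlam₃,
    by linarith, ⟨X ^ 3 - 3 * X ^ 2 + 1, by monicity!, ?_⟩, fun z hz hzx => ?_⟩
  · rw [eval₂_eq_eval_map]
    simp [hroot]
  · refine norm_lt_one_of_isRoot_minpoly (p := X ^ 3 - 3 * X ^ 2 + 1) ?_
      (abs_lt.2 ⟨hlam₂.1, by linarith⟩) (abs_lt.2 ⟨by linarith, hlam₃.2⟩) hz hzx
    rw [← hfac]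
    simp
end

section
/- Let s_k = sin(kπ/9) for k = 1,2,3,4 and let A' be the 3×3 matrix with rows (0,1,1), (1,1,1), (0,1,2). Then A' · (s₂, s₃, s₄)ᵀ = (s₄/s₁) · (s₂, s₃, s₄)ᵀ; that is, (s₂, s₃, s₄)ᵀ is a right eigenvector of A' with eigenvalue λ = s₄/s₁. -/
open Real

/-! With `θ = π/9` and `c = cos θ`, the eigenvalue is `s₄/s₁ = 1 + 2c`. Row by row, the
eigenvector equations are instances of the recurrence `s_k + s_{k+2} = 2c·s_{k+1}`, closed off
by `s₀ = 0`, the reflection `s₅ = s₄`, and `s₄ = s₁ + s₂`, which holds because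
`s₄ - s₂ = 2 s₁ cos(π/3) = s₁`. -/

theorem Real.sin_nat_mul_add_sin_nat_add_two_mul (θ : ℝ) (k : ℕ) :
    sin (k * θ) + sin ((k + 2 : ℕ) * θ) = 2 * cos θ * sin ((k + 1 : ℕ) * θ) := by
  rw [mul_right_comm, two_mul_sin_mul_cos]
  push_cast
  ring_nf

theorem Real.sin_five_mul_pi_div_nine : sin (5 * π / 9) = sin (4 * π / 9) := by
  rw [← sin_pi_sub]
  ring_nf

theorem Real.sin_four_mul_pi_div_nine :
    sin (4 * π / 9) = sin (π / 9) + sin (2 * π / 9) := by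
  have h : sin (4 * π / 9) - sin (2 * π / 9) = 2 * sin (π / 9) * cos (π / 3) := by
    rw [sin_sub_sin]
    ring_nf
  rw [cos_pi_div_three] at h
  linarith

/-- With `s_k = sin(kπ/9)` and `A'` the 3×3 matrix with rows `(0,1,1), (1,1,1),
(0,1,2)`, the vector `(s₂, s₃, s₄)ᵀ` is a right eigenvector of `A'` with
eigenvalue `λ = s₄/s₁`. -/
theorem dual_matrix_right_eigenvector (s : ℕ → ℝ)
    (hs : ∀ k, s k = Real.sin ((k : ℝ) * π / 9)) :
    Matrix.mulVec !![(0 : ℝ), 1, 1; 1, 1, 1; 0, 1, 2] ![s 2, s 3, s 4] =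
      (s 4 / s 1) • ![s 2, s 3, s 4] := by
  set c := cos (π / 9)
  have hrec (k : ℕ) : s k + s (k + 2) = 2 * c * s (k + 1) := by
    simp only [hs, mul_div_assoc]
    exact sin_nat_mul_add_sin_nat_add_two_mul _ k
  have h0 : s 0 = 0 := by simp [hs]
  have h5 : s 5 = s 4 := by simpa [hs] using sin_five_mul_pi_div_nine
  have h4 : s 4 = s 1 + s 2 := by simpa [hs] using sin_four_mul_pi_div_nine
  have h1 : s 1 ≠ 0 := by
    rw [hs, Nat.cast_one, one_mul]
    exact (sin_pos_of_pos_of_lt_pi (by positivity) (by linarith [pi_pos])).ne'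
  have heigen : s 4 / s 1 = 1 + 2 * c := by
    rw [div_eq_iff h1]
    linear_combination h4 + hrec 0 - h0
  rw [heigen]
  ext i
  fin_cases i <;>
    simp only [Fin.zero_eta, Fin.mk_one, Fin.reduceFinMk, Fin.isValue, Matrix.mulVec_cons,
      Matrix.mulVec_empty, Nat.succ_eq_add_one, Nat.reduceAdd, Pi.add_apply, Pi.smul_apply,
      Function.comp_apply, Matrix.cons_val, Matrix.cons_val_zero, Matrix.cons_val_one,
      Matrix.head_cons, Matrix.tail_cons, smul_eq_mul, mul_zero, mul_one, add_zero, zero_add]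
  · linear_combination hrec 1 + h4
  · linear_combination hrec 2
  · linear_combination (hrec 3 : s 3 + s 5 = 2 * c * s 4) - h5
end
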